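/- Suppose u = u(t,x) solves the Klein–Gordon equation □u + u = F on (0,∞) × ℝ³, with u of class C². Then for all t > 0 and x ∈ ℝ³ with r = |x|: (⟨t+r⟩/⟨t−r⟩) |u(t,x)| ≲ |∂Γ^{≤1}u(t,x)| + (⟨t+r⟩/⟨t−r⟩) |F(t,x)|. -/

import Mathlib

open Real MeasureTheory

/-- Partial derivative in the `j`-th space-time coordinate (`0` = time, `1,2,3` = space). -/
noncomputable def pd (j : Fin 4) (U : (Fin 4 → ℝ) → ℝ) : (Fin 4 → ℝ) → ℝ :=
  fun z => fderiv ℝ U z (Pi.single j 1)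

/-- Spatial Laplacian. -/
noncomputable def lap (U : (Fin 4 → ℝ) → ℝ) : (Fin 4 → ℝ) → ℝ :=
  fun z => ∑ i : Fin 3, pd i.succ (pd i.succ U) z

/-- The d'Alembertian `□ = ∂_tt − Δ`. -/
noncomputable def box (U : (Fin 4 → ℝ) → ℝ) : (Fin 4 → ℝ) → ℝ :=
  fun z => pd 0 (pd 0 U) z - lap U z

/-- The spatial radius `r = |x|`. -/
noncomputable def rad (z : Fin 4 → ℝ) : ℝ := Real.sqrt (∑ i : Fin 3, (z i.succ)^2)

/-- Lorentz boost `Ω_{i0} = t∂_i + x_i ∂_t`. -/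
noncomputable def boost (i : Fin 3) (U : (Fin 4 → ℝ) → ℝ) : (Fin 4 → ℝ) → ℝ :=
  fun z => z 0 * pd i.succ U z + z i.succ * pd 0 U z

/-- Rotation `Ω_{ij} = x_i∂_j − x_j∂_i`. -/
noncomputable def rot (i j : Fin 3) (U : (Fin 4 → ℝ) → ℝ) : (Fin 4 → ℝ) → ℝ :=
  fun z => z i.succ * pd j.succ U z - z j.succ * pd i.succ U z

/-- Radial derivative `∂_r = (x/r)·∇`. -/
noncomputable def dr (U : (Fin 4 → ℝ) → ℝ) : (Fin 4 → ℝ) → ℝ :=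
  fun z => ∑ i : Fin 3, (z i.succ / rad z) * pd i.succ U z

/-- Japanese bracket `⟨s⟩ = √(1+s²)`. -/
noncomputable def jb (s : ℝ) : ℝ := Real.sqrt (1 + s^2)

/-- The eleven operators `Γ^{≤1}`: identity, `∂_t`, `∂_i`, boosts, rotations. -/
noncomputable def gam : Fin 11 → ((Fin 4 → ℝ) → ℝ) → ((Fin 4 → ℝ) → ℝ) :=
  ![id, pd 0, pd 1, pd 2, pd 3, boost 0, boost 1, boost 2, rot 0 1, rot 0 2, rot 1 2]

/-- `|∂Γ^{≤1}u|`: the ℓ² norm of all space-time first derivatives of all `Γ^{≤1}u`. -/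
noncomputable def dGam (U : (Fin 4 → ℝ) → ℝ) (z : Fin 4 → ℝ) : ℝ :=
  Real.sqrt (∑ a : Fin 4, ∑ k : Fin 11, (pd a (gam k U) z)^2)

/-!
Since `u = F - □u`, it suffices to show `⟨t + r⟩ |□u| ≲ ⟨t - r⟩ |∂Γ^{≤1}u|`. Where
`⟨t + r⟩ ≤ 4 ⟨t - r⟩` this follows from `|□u| ≲ |∂²u| ≤ |∂Γ^{≤1}u|`. Otherwise `t + r > 1` and
`t, r ≥ 3(t + r)/8`, and one uses the identity
`t r² □u = t ∑ xᵢ ∂ₜΩᵢ₀u - t ∑ xᵢ ∂ᵢu - r² ∑ ∂ᵢΩᵢ₀u + 3 r² ∂ₜu + (r² - t²) ∑ xᵢ ∂ᵢ∂ₜu`,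
in which the only term that is not already of the form `x ∂Γu` carries the factor
`r² - t² = (r - t)(r + t)`.
-/

lemma jb_pos (s : ℝ) : 0 < jb s := Real.sqrt_pos.2 (by positivity)

lemma sq_jb (s : ℝ) : jb s ^ 2 = 1 + s ^ 2 := Real.sq_sqrt (by positivity)

lemma one_le_jb (s : ℝ) : 1 ≤ jb s := by
  nlinarith [sq_jb s, jb_pos s]

lemma abs_le_jb (s : ℝ) : |s| ≤ jb s :=
  Real.abs_le_sqrt (by nlinarith)

lemma jb_le_one_add {s : ℝ} (hs : 0 ≤ s) : jb s ≤ 1 + s :=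
  Real.sqrt_le_iff.2 ⟨by positivity, by nlinarith⟩

lemma one_lt_and_four_mul_abs_lt_of_four_mul_jb_lt {s d : ℝ} (hs : 0 ≤ s)
    (h : 4 * jb d < jb s) : 1 < s ∧ 4 * |d| < s := by
  have hsq : 16 * (1 + d ^ 2) < 1 + s ^ 2 := by
    have := mul_self_lt_mul_self (by linarith [jb_pos d]) h
    nlinarith [sq_jb d, sq_jb s]
  refine ⟨by nlinarith, lt_of_pow_lt_pow_left₀ 2 hs ?_⟩
  nlinarith [sq_abs d]

lemma jb_mul_le_of_four_mul_jb_lt {t r B G : ℝ} (ht : 0 < t) (hr : 0 ≤ r) (hB : 0 ≤ B)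
    (hG : 0 ≤ G) (hcone : 4 * jb (t - r) < jb (t + r))
    (h : t * r ^ 2 * B ≤ 3 * r * (t + r) * (2 + |t - r|) * G) :
    jb (t + r) * B ≤ 128 * (jb (t - r) * G) := by
  obtain ⟨hs, hd⟩ := one_lt_and_four_mul_abs_lt_of_four_mul_jb_lt (by linarith) hcone
  have ht' : 3 * (t + r) < 8 * t := by linarith [neg_abs_le (t - r)]
  have hr' : 3 * (t + r) < 8 * r := by linarith [le_abs_self (t - r)]
  have hrpos : 0 < r := by linarith
  have htr : t * r * B ≤ 3 * (t + r) * (2 + |t - r|) * G :=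
    le_of_mul_le_mul_right (by linarith) hrpos
  have hprod : 3 * (t + r) * (3 * (t + r)) < 8 * t * (8 * r) :=
    mul_lt_mul'' ht' hr' (by linarith) (by linarith)
  have hsB : 3 * (t + r) * B ≤ 64 * (2 + |t - r|) * G := by
    refine le_of_mul_le_mul_left ?_ (by linarith : 0 < 3 * (t + r))
    nlinarith [mul_le_mul_of_nonneg_right hprod.le hB]
  have hweight : 2 + |t - r| ≤ 3 * jb (t - r) := by
    linarith [one_le_jb (t - r), abs_le_jb (t - r)]
  have hP : jb (t + r) ≤ 2 * (t + r) := by linarith [jb_le_one_add (by linarith : 0 ≤ t + r)]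
  calc jb (t + r) * B ≤ 2 * (t + r) * B := mul_le_mul_of_nonneg_right hP hB
    _ ≤ 128 / 3 * (2 + |t - r|) * G := by linarith
    _ ≤ 128 * (jb (t - r) * G) := by nlinarith

lemma isOpen_setOf_time_pos : IsOpen {z : Fin 4 → ℝ | 0 < z 0} :=
  isOpen_lt continuous_const (continuous_apply 0)

section Derivatives

variable {U : (Fin 4 → ℝ) → ℝ} {z : Fin 4 → ℝ}

lemma hasFDerivAt_pd (hU : ContDiffAt ℝ 2 U z) (b : Fin 4) :
    HasFDerivAt (pd b U) ((fderiv ℝ (fderiv ℝ U) z).flip (Pi.single b 1)) z := by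
  have hdiff : DifferentiableAt ℝ (fderiv ℝ U) z :=
    (hU.fderiv_right (m := 1) le_rfl).differentiableAt one_ne_zero
  have hpd : HasFDerivAt (fun y => fderiv ℝ U y (Pi.single b 1))
      ((fderiv ℝ (fderiv ℝ U) z).flip (Pi.single b 1)) z := by
    simpa using hdiff.hasFDerivAt.clm_apply (hasFDerivAt_const (Pi.single b (1 : ℝ)) z)
  exact hpd

lemma pd_pd_eq (hU : ContDiffAt ℝ 2 U z) (a b : Fin 4) :
    pd a (pd b U) z = fderiv ℝ (fderiv ℝ U) z (Pi.single a 1) (Pi.single b 1) := by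
  simp only [pd, (hasFDerivAt_pd hU b).fderiv, ContinuousLinearMap.flip_apply]

lemma pd_pd_comm (hU : ContDiffAt ℝ 2 U z) (a b : Fin 4) :
    pd a (pd b U) z = pd b (pd a U) z := by
  rw [pd_pd_eq hU, pd_pd_eq hU]
  exact hU.isSymmSndFDerivAt (by simp) _ _

lemma pd_boost (hU : ContDiffAt ℝ 2 U z) (i : Fin 3) (a : Fin 4) :
    pd a (boost i U) z = (Pi.single a 1 : Fin 4 → ℝ) 0 * pd i.succ U z
      + z 0 * pd a (pd i.succ U) z + (Pi.single a 1 : Fin 4 → ℝ) i.succ * pd 0 U z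
      + z i.succ * pd a (pd 0 U) z := by
  have hderiv : HasFDerivAt (boost i U) _ z :=
    ((hasFDerivAt_apply 0 z).mul (hasFDerivAt_pd hU i.succ)).add
      ((hasFDerivAt_apply i.succ z).mul (hasFDerivAt_pd hU 0))
  rw [pd, hderiv.fderiv]
  simp only [add_apply, smul_apply,
    ContinuousLinearMap.flip_apply, ContinuousLinearMap.proj_apply, smul_eq_mul, ← pd_pd_eq hU]
  ring

lemma pd_zero_boost (hU : ContDiffAt ℝ 2 U z) (i : Fin 3) :
    pd 0 (boost i U) z
      = pd i.succ U z + z 0 * pd i.succ (pd 0 U) z + z i.succ * pd 0 (pd 0 U) z := by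
  simp [pd_boost hU, pd_pd_comm hU 0 i.succ, Fin.succ_ne_zero]

lemma pd_succ_boost_self (hU : ContDiffAt ℝ 2 U z) (i : Fin 3) :
    pd i.succ (boost i U) z
      = z 0 * pd i.succ (pd i.succ U) z + pd 0 U z + z i.succ * pd i.succ (pd 0 U) z := by
  simp [pd_boost hU, Fin.succ_ne_zero]

lemma sq_rad (z : Fin 4 → ℝ) : rad z ^ 2 = ∑ i : Fin 3, z i.succ ^ 2 :=
  Real.sq_sqrt (by positivity)

lemma time_mul_sq_rad_mul_box (hU : ContDiffAt ℝ 2 U z) :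
    z 0 * rad z ^ 2 * box U z
      = z 0 * ∑ i : Fin 3, z i.succ * pd 0 (boost i U) z
        - z 0 * ∑ i : Fin 3, z i.succ * pd i.succ U z
        - rad z ^ 2 * ∑ i : Fin 3, pd i.succ (boost i U) z
        + 3 * rad z ^ 2 * pd 0 U z
        + (rad z ^ 2 - z 0 ^ 2) * ∑ i : Fin 3, z i.succ * pd i.succ (pd 0 U) z := by
  simp only [pd_zero_boost hU, pd_succ_boost_self hU, box, lap, sq_rad, Fin.sum_univ_three]
  ring

end Derivatives

lemma abs_sum_le_card_mul {ι : Type*} (s : Finset ι) {a : ι → ℝ} {G : ℝ}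
    (ha : ∀ i ∈ s, |a i| ≤ G) : |∑ i ∈ s, a i| ≤ s.card * G := by
  simpa using (Finset.abs_sum_le_sum_abs a s).trans (Finset.sum_le_card_nsmul s _ G ha)

lemma abs_sum_mul_le_card_mul {ι : Type*} (s : Finset ι) {x a : ι → ℝ} {R G : ℝ}
    (hx : ∀ i ∈ s, |x i| ≤ R) (ha : ∀ i ∈ s, |a i| ≤ G) :
    |∑ i ∈ s, x i * a i| ≤ s.card * (R * G) :=
  abs_sum_le_card_mul s fun i hi => (abs_mul (x i) (a i)).trans_le <|
    mul_le_mul (hx i hi) (ha i hi) (abs_nonneg _) ((abs_nonneg _).trans (hx i hi))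

lemma abs_coord_le_rad (z : Fin 4 → ℝ) (i : Fin 3) : |z i.succ| ≤ rad z :=
  Real.abs_le_sqrt <| Finset.single_le_sum (f := fun j : Fin 3 => z j.succ ^ 2)
    (fun _ _ => sq_nonneg _) (Finset.mem_univ i)

section Bounds

variable (U : (Fin 4 → ℝ) → ℝ) (z : Fin 4 → ℝ)

lemma abs_pd_gam_le_dGam (a : Fin 4) (k : Fin 11) : |pd a (gam k U) z| ≤ dGam U z := by
  refine Real.abs_le_sqrt ((Finset.single_le_sum (f := fun k' => pd a (gam k' U) z ^ 2)
    (fun _ _ => sq_nonneg _) (Finset.mem_univ k)).trans ?_)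
  exact Finset.single_le_sum (f := fun a' => ∑ k' : Fin 11, pd a' (gam k' U) z ^ 2)
    (fun _ _ => Finset.sum_nonneg fun _ _ => sq_nonneg _) (Finset.mem_univ a)

lemma abs_pd_le_dGam (a : Fin 4) : |pd a U z| ≤ dGam U z :=
  abs_pd_gam_le_dGam U z a 0

lemma abs_pd_pd_le_dGam (a b : Fin 4) : |pd a (pd b U) z| ≤ dGam U z := by
  fin_cases b
  exacts [abs_pd_gam_le_dGam U z a 1, abs_pd_gam_le_dGam U z a 2,
    abs_pd_gam_le_dGam U z a 3, abs_pd_gam_le_dGam U z a 4]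

lemma abs_pd_boost_le_dGam (a : Fin 4) (i : Fin 3) : |pd a (boost i U) z| ≤ dGam U z := by
  fin_cases i
  exacts [abs_pd_gam_le_dGam U z a 5, abs_pd_gam_le_dGam U z a 6, abs_pd_gam_le_dGam U z a 7]

lemma abs_box_le_four_mul_dGam : |box U z| ≤ 4 * dGam U z := by
  have hlap : |lap U z| ≤ 3 * dGam U z := by
    simpa [lap] using abs_sum_le_card_mul (Finset.univ : Finset (Fin 3)) fun i _ =>
      abs_pd_pd_le_dGam U z i.succ i.succ
  calc |box U z| = |pd 0 (pd 0 U) z - lap U z| := rfl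
    _ ≤ 4 * dGam U z := by
      linarith [abs_sub (pd 0 (pd 0 U) z) (lap U z), abs_pd_pd_le_dGam U z 0 0]

variable {U z}

lemma time_mul_sq_rad_mul_abs_box_le (hU : ContDiffAt ℝ 2 U z) (ht : 0 ≤ z 0) :
    z 0 * rad z ^ 2 * |box U z|
      ≤ 3 * rad z * (z 0 + rad z) * (2 + |z 0 - rad z|) * dGam U z := by
  set t := z 0
  set r := rad z
  set G := dGam U z
  have hr : 0 ≤ r := Real.sqrt_nonneg _
  have hcoord : ∀ i ∈ (Finset.univ : Finset (Fin 3)), |z i.succ| ≤ r :=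
    fun i _ => abs_coord_le_rad z i
  have h₁ : |∑ i : Fin 3, z i.succ * pd 0 (boost i U) z| ≤ 3 * (r * G) := by
    simpa using abs_sum_mul_le_card_mul _ hcoord fun i _ => abs_pd_boost_le_dGam U z 0 i
  have h₂ : |∑ i : Fin 3, z i.succ * pd i.succ U z| ≤ 3 * (r * G) := by
    simpa using abs_sum_mul_le_card_mul _ hcoord fun i _ => abs_pd_le_dGam U z i.succ
  have h₃ : |∑ i : Fin 3, pd i.succ (boost i U) z| ≤ 3 * G := by
    simpa using abs_sum_le_card_mul (Finset.univ : Finset (Fin 3)) fun i _ =>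
      abs_pd_boost_le_dGam U z i.succ i
  have h₄ : |∑ i : Fin 3, z i.succ * pd i.succ (pd 0 U) z| ≤ 3 * (r * G) := by
    simpa using abs_sum_mul_le_card_mul _ hcoord fun i _ => abs_pd_pd_le_dGam U z i.succ 0
  have hfactor : |r ^ 2 - t ^ 2| = |t - r| * (t + r) := by
    rw [← abs_of_nonneg (by linarith : 0 ≤ t + r), ← abs_mul, ← abs_neg]
    congr 1
    ring
  have hidentity := time_mul_sq_rad_mul_box hU
  set S₁ := ∑ i : Fin 3, z i.succ * pd 0 (boost i U) z
  set S₂ := ∑ i : Fin 3, z i.succ * pd i.succ U z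
  set S₃ := ∑ i : Fin 3, pd i.succ (boost i U) z
  set S₄ := ∑ i : Fin 3, z i.succ * pd i.succ (pd 0 U) z
  have hA : |t * S₁| ≤ t * (3 * (r * G)) := by
    rw [abs_mul, abs_of_nonneg ht]; exact mul_le_mul_of_nonneg_left h₁ ht
  have hB : |t * S₂| ≤ t * (3 * (r * G)) := by
    rw [abs_mul, abs_of_nonneg ht]; exact mul_le_mul_of_nonneg_left h₂ ht
  have hC : |r ^ 2 * S₃| ≤ r ^ 2 * (3 * G) := by
    rw [abs_mul, abs_of_nonneg (sq_nonneg r)]; exact mul_le_mul_of_nonneg_left h₃ (sq_nonneg r)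
  have hD : |3 * r ^ 2 * pd 0 U z| ≤ 3 * r ^ 2 * G := by
    rw [abs_mul, abs_of_nonneg (by positivity)]
    exact mul_le_mul_of_nonneg_left (abs_pd_le_dGam U z 0) (by positivity)
  have hE : |(r ^ 2 - t ^ 2) * S₄| ≤ |t - r| * (t + r) * (3 * (r * G)) := by
    rw [abs_mul, hfactor]; exact mul_le_mul_of_nonneg_left h₄ (by positivity)
  calc t * r ^ 2 * |box U z| = |t * r ^ 2 * box U z| := by
        rw [abs_mul, abs_mul, abs_of_nonneg ht, abs_of_nonneg (sq_nonneg r)]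
    _ ≤ 3 * r * (t + r) * (2 + |t - r|) * G := by
      rw [hidentity]
      refine abs_le.2 ⟨?_, ?_⟩ <;>
        linarith [abs_le.1 hA, abs_le.1 hB, abs_le.1 hC, abs_le.1 hD, abs_le.1 hE]

lemma jb_mul_abs_box_le (hU : ContDiffAt ℝ 2 U z) (ht : 0 < z 0) :
    jb (z 0 + rad z) * |box U z| ≤ 128 * (jb (z 0 - rad z) * dGam U z) := by
  have hG : 0 ≤ dGam U z := Real.sqrt_nonneg _
  by_cases hcone : 4 * jb (z 0 - rad z) < jb (z 0 + rad z)
  · exact jb_mul_le_of_four_mul_jb_lt ht (Real.sqrt_nonneg _) (abs_nonneg _) hG hcone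
      (time_mul_sq_rad_mul_abs_box_le hU ht.le)
  · calc jb (z 0 + rad z) * |box U z| ≤ 4 * jb (z 0 - rad z) * (4 * dGam U z) :=
          mul_le_mul (not_lt.1 hcone) (abs_box_le_four_mul_dGam U z) (abs_nonneg _)
            (by linarith [jb_pos (z 0 - rad z)])
      _ ≤ 128 * (jb (z 0 - rad z) * dGam U z) := by nlinarith [jb_pos (z 0 - rad z)]

end Bounds

/-- **Pointwise Klein–Gordon weight estimate** (Lemma 2.7): if `□u + u = F` on
`(0,∞) × ℝ³` with `u` of class `C²`, then for `t > 0`: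
`(⟨t+r⟩/⟨t−r⟩)|u| ≲ |∂Γ^{≤1}u| + (⟨t+r⟩/⟨t−r⟩)|F|`, absolute constant. -/
theorem kleinGordon_weight_estimate :
    ∃ C > 0, ∀ U F : (Fin 4 → ℝ) → ℝ,
      ContDiffOn ℝ 2 U {z : Fin 4 → ℝ | 0 < z 0} →
      (∀ z : Fin 4 → ℝ, 0 < z 0 → box U z + U z = F z) →
      ∀ z : Fin 4 → ℝ, 0 < z 0 →
        (jb (z 0 + rad z) / jb (z 0 - rad z)) * |U z|
          ≤ C * (dGam U z + (jb (z 0 + rad z) / jb (z 0 - rad z)) * |F z|) := by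
  refine ⟨128, by norm_num, fun U F hU hKG z hz => ?_⟩
  set w := jb (z 0 + rad z) / jb (z 0 - rad z)
  have hw : 0 ≤ w := div_nonneg (jb_pos _).le (jb_pos _).le
  have hbox : w * |box U z| ≤ 128 * dGam U z := by
    rw [div_mul_eq_mul_div, div_le_iff₀ (jb_pos _)]
    linarith [jb_mul_abs_box_le (hU.contDiffAt (isOpen_setOf_time_pos.mem_nhds hz)) hz]
  have hU_le : |U z| ≤ |F z| + |box U z| := by
    rw [show U z = F z - box U z by linarith [hKG z hz]]
    exact abs_sub _ _
  calc w * |U z| ≤ w * |F z| + w * |box U z| := by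
        rw [← mul_add]; exact mul_le_mul_of_nonneg_left hU_le hw
    _ ≤ 128 * (dGam U z + w * |F z|) := by linarith [mul_nonneg hw (abs_nonneg (F z))]
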